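/- In any spherical tiling by combinatorially congruent pentagons there is a tile in which at least four of the five vertices have degree 3. (Numerically: if 3f = 2v - 4, v = sum_{i>=3} v_i, 2e = sum i*v_i = 5f, and t_j counts degree-3 vertices of tile j with sum_j t_j = 3 v3, then some t_j >= 4.) -/
import Mathlib


/-- In any spherical tiling by combinatorially congruent pentagons there is a
tile with at least four vertices of degree 3: if `3f = 2v - 4`,
`v = Σ vi i`, `2e = Σ i * vi i = 5f` and `t j` counts degree-3 vertices of the
`j`-th tile with `Σ t j = 3 * v₃`, then some `t j ≥ 4`. -/
theorem pentagon_tiling_tile_with_four_degree_three (N f e v : ℕ) (vi : ℕ → ℕ)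
    (t : ℕ → ℕ)
    (hf : 3 * f + 4 = 2 * v)
    (hv : v = ∑ i ∈ Finset.Icc 3 N, vi i)
    (he : 2 * e = ∑ i ∈ Finset.Icc 3 N, i * vi i)
    (hds : 2 * e = 5 * f)
    (ht : ∑ j ∈ Finset.range f, t j = 3 * vi 3) :
    ∃ j < f, 4 ≤ t j := by
  have hN : 3 ≤ N := by
    by_contra h
    push_neg at h
    rw [Finset.Icc_eq_empty (by omega), Finset.sum_empty] at hv
    omega
  have key : 4 * v ≤ vi 3 + 2 * e := by
    rw [hv, he, Finset.mul_sum]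
    calc ∑ i ∈ Finset.Icc 3 N, 4 * vi i
        ≤ ∑ i ∈ Finset.Icc 3 N, (i * vi i + if i = 3 then vi i else 0) := by
          apply Finset.sum_le_sum
          intro i hi
          have h3 : 3 ≤ i := (Finset.mem_Icc.mp hi).1
          rcases Nat.eq_or_lt_of_le h3 with h | h
          · simp [← h]; omega
          · simp [show i ≠ 3 by omega]
            nlinarith
      _ = (∑ i ∈ Finset.Icc 3 N, i * vi i) + vi 3 := by
          rw [Finset.sum_add_distrib, Finset.sum_ite_eq' (Finset.Icc 3 N) 3 vi,
            if_pos (Finset.mem_Icc.mpr ⟨le_refl 3, hN⟩)]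
      _ = vi 3 + ∑ i ∈ Finset.Icc 3 N, i * vi i := by ring
  by_contra h
  push_neg at h
  have hb : ∑ j ∈ Finset.range f, t j ≤ ∑ j ∈ Finset.range f, 3 := by
    apply Finset.sum_le_sum
    intro j hj
    have := h j (Finset.mem_range.mp hj)
    omega
  simp [Finset.sum_const, Finset.card_range, Nat.mul_comm] at hb
  omega
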